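/- Let L be a distributive lattice with 0, let φ : Op⁻k^(I) → L be a 0-lattice homomorphism, and let a, b ∈ k^(I). Suppose that for every e ∈ L with φ⟨a⟩ ≤ φ⟨b⟩ ∨ e there exists a scalar λ ≥ 0 such that φ⟨a − λb⟩ ≤ φ⟨−b⟩ ∨ e. Then φ is closed at the pair (⟨a⟩, ⟨b⟩): for every e ∈ L with φ⟨a⟩ ≤ φ⟨b⟩ ∨ e there exists U ∈ Op⁻k^(I) with ⟨a⟩ ⊆ ⟨b⟩ ∪ U and φ(U) ≤ e. -/

import Mathlib

/-- The open half-space associated to `x ∈ k^(I)`: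
`⟨x⟩ = { z : (x ∣ z) > 0 }` where `(x ∣ z) = Σᵢ xᵢ zᵢ`. -/
def halfSpace {k I : Type*} [Field k] [LinearOrder k] [IsStrictOrderedRing k] (x : I →₀ k) : Set (I →₀ k) :=
  {z | 0 < x.sum fun i xi => xi * z i}

/-- `Op⁻ k^(I)`: the sublattice of the powerset of `k^(I)` generated by `∅` together
with all open half-spaces `⟨x⟩`. -/
def OpNeg (k I : Type*) [Field k] [LinearOrder k] [IsStrictOrderedRing k] : Sublattice (Set (I →₀ k)) :=
  sInf {S | ∅ ∈ S ∧ ∀ x : I →₀ k, halfSpace x ∈ S}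

lemma empty_mem_OpNeg {k I : Type*} [Field k] [LinearOrder k] [IsStrictOrderedRing k] :
    (∅ : Set (I →₀ k)) ∈ OpNeg k I :=
  Sublattice.mem_sInf.2 fun _ hS => hS.1

lemma halfSpace_mem_OpNeg {k I : Type*} [Field k] [LinearOrder k] [IsStrictOrderedRing k] (x : I →₀ k) :
    halfSpace x ∈ OpNeg k I :=
  Sublattice.mem_sInf.2 fun _ hS => hS.2 x

/-- The half-space `⟨x⟩` as an element of the lattice `Op⁻ k^(I)`. -/
def hs {k I : Type*} [Field k] [LinearOrder k] [IsStrictOrderedRing k] (x : I →₀ k) : OpNeg k I :=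
  ⟨halfSpace x, halfSpace_mem_OpNeg x⟩

lemma pair_eq {k I : Type*} [Field k] [LinearOrder k] [IsStrictOrderedRing k] (x z : I →₀ k) :
    (x.sum fun i xi => xi * z i) = Finsupp.linearCombination k (⇑z) x := by
  simp [Finsupp.linearCombination_apply, smul_eq_mul]

lemma mem_halfSpace_iff {k I : Type*} [Field k] [LinearOrder k] [IsStrictOrderedRing k] (x z : I →₀ k) :
    z ∈ halfSpace x ↔ 0 < Finsupp.linearCombination k (⇑z) x := by
  rw [halfSpace, Set.mem_setOf_eq, pair_eq]

theorem closedAt_halfSpaces {k I L : Type*} [Field k] [LinearOrder k] [IsStrictOrderedRing k]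
    [DistribLattice L] [OrderBot L]
    (φ : LatticeHom (OpNeg k I) L) (hbot : φ ⟨∅, empty_mem_OpNeg⟩ = ⊥)
    (a b : I →₀ k)
    (h : ∀ e : L, φ (hs a) ≤ φ (hs b) ⊔ e →
      ∃ lam : k, 0 ≤ lam ∧ φ (hs (a - lam • b)) ≤ φ (hs (-b)) ⊔ e) :
    ∀ e : L, φ (hs a) ≤ φ (hs b) ⊔ e →
      ∃ U : OpNeg k I, halfSpace a ⊆ halfSpace b ∪ ↑U ∧ φ U ≤ e := by
  intro e he
  obtain ⟨lam, hlam, hle⟩ := h e he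
  refine ⟨hs a ⊓ hs (a - lam • b), ?_, ?_⟩
  · intro z hz
    by_cases hb : z ∈ halfSpace b
    · exact Or.inl hb
    · refine Or.inr ?_
      have hz' := (mem_halfSpace_iff a z).1 hz
      have hb' : Finsupp.linearCombination k (⇑z) b ≤ 0 := by
        simpa [mem_halfSpace_iff] using hb
      have : z ∈ halfSpace (a - lam • b) := by
        rw [mem_halfSpace_iff, map_sub, map_smul, smul_eq_mul]
        have : lam * Finsupp.linearCombination k (⇑z) b ≤ 0 :=
          mul_nonpos_of_nonneg_of_nonpos hlam hb'
        linarith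
      exact ⟨hz, this⟩
  · have hdisj : hs (b : I →₀ k) ⊓ hs (-b) = (⟨∅, empty_mem_OpNeg⟩ : OpNeg k I) := by
      apply Subtype.ext
      show halfSpace b ∩ halfSpace (-b) = ∅
      ext z
      simp only [Set.mem_inter_iff, Set.mem_empty_iff_false, iff_false, not_and,
        mem_halfSpace_iff, map_neg]
      intro h1
      linarith
    calc φ (hs a ⊓ hs (a - lam • b)) = φ (hs a) ⊓ φ (hs (a - lam • b)) := map_inf φ _ _
      _ ≤ (φ (hs b) ⊔ e) ⊓ (φ (hs (-b)) ⊔ e) := inf_le_inf he hle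
      _ = (φ (hs b) ⊓ φ (hs (-b))) ⊔ e := (sup_inf_right _ _ _).symm
      _ = e := by rw [← map_inf, hdisj, hbot, bot_sup_eq]
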